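/- arXiv:0906.3266 — 3 statements merged into one kernel-verified Lean document; each statement's English description precedes it below -/
import Mathlib

section
/- Let {g_u}_{u∈G} be a bounded family of elements of a Hilbert space H indexed by a finitely generated abelian group G and let {Φ_N} be a Følner sequence in G. Then for any finite set F ⊆ G, limsup_{N→∞} ‖(1/|Φ_N|) Σ_{u∈Φ_N} g_u‖² ≤ limsup_{N→∞} (1/|F|²) Σ_{v,w∈F} (1/|Φ_N|) Σ_{u∈Φ_N} ⟨g_{u+v}, g_{u+w}⟩. -/
/-!
Let `h u` be the average of the translates `g (u + v)`, `v ∈ F`. By the Følner property,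
averaging `g` or `h` over `Φ N` gives asymptotically the same vector, and both are bounded.
So `limsup ‖avg g‖²` is at most `limsup ‖avg h‖²`, which by Cauchy–Schwarz is at most
`limsup avg ‖h‖²`; expanding `‖h u‖²` as a double sum of inner products gives the
right-hand side.
-/

open MeasureTheory Filter

/-- A Følner sequence of finite subsets of an additive group: translates of `Φ N`
asymptotically almost coincide with `Φ N`. -/
def IsFolner {G : Type*} [AddCommGroup G] [DecidableEq G] (Φ : ℕ → Finset G) : Prop :=
  (∀ N, (Φ N).Nonempty) ∧
  ∀ g : G, Filter.Tendsto
    (fun N => (((((Φ N).image (fun x => g + x)) \ Φ N) ∪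
        (Φ N \ ((Φ N).image (fun x => g + x)))).card : ℝ) / (Φ N).card)
    Filter.atTop (nhds 0)

open Finset Topology
open scoped symmDiff RealInnerProductSpace

namespace VanDerCorput

-- The average over the empty set is `0`.
noncomputable def avg {ι E : Type*} [AddCommGroup E] [Module ℝ E] (s : Finset ι)
    (f : ι → E) : E :=
  (#s : ℝ)⁻¹ • ∑ i ∈ s, f i

section Real

variable {ι : Type*} {s : Finset ι} {f : ι → ℝ} {C : ℝ}

theorem avg_nonneg (hf : ∀ i ∈ s, 0 ≤ f i) : 0 ≤ avg s f :=
  mul_nonneg (by positivity) (sum_nonneg hf)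

theorem avg_le (hC : 0 ≤ C) (hf : ∀ i ∈ s, f i ≤ C) : avg s f ≤ C := by
  rcases s.eq_empty_or_nonempty with rfl | hs
  · simpa [avg] using hC
  calc avg s f ≤ (#s : ℝ)⁻¹ * ∑ _i ∈ s, C := by
        rw [avg, smul_eq_mul]
        gcongr with i hi
        exact hf i hi
    _ = C := by
        rw [sum_const, nsmul_eq_mul, ← mul_assoc,
          inv_mul_cancel₀ (by exact_mod_cast hs.card_pos.ne'), one_mul]

end Real

section Normed

variable {ι E : Type*} [SeminormedAddCommGroup E]

theorem norm_sum_sub_sum_le [DecidableEq ι] (S T : Finset ι) {f : ι → E} {C : ℝ}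
    (hf : ∀ i, ‖f i‖ ≤ C) :
    ‖∑ i ∈ S, f i - ∑ i ∈ T, f i‖ ≤ C * #(S ∆ T) := by
  rw [← sum_sdiff_sub_sum_sdiff, symmDiff_def, sup_eq_union,
    card_union_of_disjoint disjoint_sdiff_sdiff, Nat.cast_add, mul_add]
  refine (norm_sub_le _ _).trans (add_le_add ?_ ?_) <;>
  · refine (norm_sum_le _ _).trans ?_
    simpa [mul_comm C] using sum_le_sum fun i (_ : i ∈ _) => hf i

theorem sq_norm_le_sq_norm_add {a b : E} {C : ℝ} (ha : ‖a‖ ≤ C) (hb : ‖b‖ ≤ C) :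
    ‖a‖ ^ 2 ≤ ‖b‖ ^ 2 + 2 * C * ‖a - b‖ := by
  have hdiff : ‖a‖ - ‖b‖ ≤ ‖a - b‖ := norm_sub_norm_le a b
  nlinarith [norm_nonneg a, norm_nonneg b, norm_nonneg (a - b)]

variable [NormedSpace ℝ E]

theorem avg_sub (s : Finset ι) (f f' : ι → E) :
    avg s (fun i => f i - f' i) = avg s f - avg s f' := by
  simp only [avg, sum_sub_distrib, smul_sub]

theorem avg_const {s : Finset ι} (hs : s.Nonempty) (x : E) : avg s (fun _ => x) = x := by
  rw [avg, sum_const, ← Nat.cast_smul_eq_nsmul ℝ, smul_smul,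
    inv_mul_cancel₀ (by exact_mod_cast hs.card_pos.ne'), one_smul]

theorem avg_comm {κ : Type*} (s : Finset ι) (t : Finset κ) (f : ι → κ → E) :
    avg s (fun i => avg t (f i)) = avg t (fun j => avg s (f · j)) := by
  simp only [avg, ← smul_sum, smul_smul, mul_comm]
  rw [sum_comm]

theorem tendsto_avg {α : Type*} {l : Filter α} {s : Finset ι} {f : ι → α → E}
    {a : ι → E} (hf : ∀ i ∈ s, Tendsto (f i) l (𝓝 (a i))) :
    Tendsto (fun x => avg s (fun i => f i x)) l (𝓝 (avg s a)) :=
  (tendsto_finsetSum s hf).const_smul _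

theorem norm_avg_le_avg_norm (s : Finset ι) (f : ι → E) :
    ‖avg s f‖ ≤ avg s (fun i => ‖f i‖) := by
  rw [avg, avg, norm_smul, norm_inv, Real.norm_natCast, smul_eq_mul]
  gcongr
  exact norm_sum_le _ _

theorem norm_avg_le {s : Finset ι} {f : ι → E} {C : ℝ} (hC : 0 ≤ C)
    (hf : ∀ i ∈ s, ‖f i‖ ≤ C) : ‖avg s f‖ ≤ C :=
  (norm_avg_le_avg_norm s f).trans (avg_le hC hf)

theorem sq_norm_avg_le_avg_sq_norm (s : Finset ι) (f : ι → E) :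
    ‖avg s f‖ ^ 2 ≤ avg s (fun i => ‖f i‖ ^ 2) := by
  calc ‖avg s f‖ ^ 2 ≤ avg s (fun i => ‖f i‖) ^ 2 := by
        gcongr
        exact norm_avg_le_avg_norm s f
    _ ≤ (#s : ℝ)⁻¹ ^ 2 * (#s * ∑ i ∈ s, ‖f i‖ ^ 2) := by
        rw [avg, smul_eq_mul, mul_pow]
        gcongr
        exact sq_sum_le_card_mul_sum_sq
    _ = avg s (fun i => ‖f i‖ ^ 2) := by
        rcases s.eq_empty_or_nonempty with rfl | hs
        · simp [avg]
        have : (#s : ℝ) ≠ 0 := by exact_mod_cast hs.card_pos.ne'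
        rw [avg, smul_eq_mul]
        field_simp

end Normed

section Inner

variable {ι κ E : Type*} [NormedAddCommGroup E] [InnerProductSpace ℝ E]

theorem sq_norm_avg_eq (s : Finset ι) (f : ι → E) :
    ‖avg s f‖ ^ 2 = ((#s : ℝ) ^ 2)⁻¹ * ∑ i ∈ s, ∑ j ∈ s, ⟪f i, f j⟫ := by
  rw [← real_inner_self_eq_norm_sq, avg, real_inner_smul_left, real_inner_smul_right, sum_inner]
  simp only [inner_sum]
  ring

theorem avg_sq_norm_avg_eq (s : Finset ι) (t : Finset κ) (f : ι → κ → E) :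
    avg s (fun i => ‖avg t (f i)‖ ^ 2) =
      ((#t : ℝ) ^ 2)⁻¹ * ∑ j ∈ t, ∑ k ∈ t, avg s (fun i => ⟪f i j, f i k⟫) := by
  simp only [sq_norm_avg_eq]
  simp only [avg, smul_eq_mul, mul_sum]
  rw [sum_comm]
  refine sum_congr rfl fun j _ => ?_
  rw [sum_comm]
  exact sum_congr rfl fun k _ => sum_congr rfl fun i _ => mul_left_comm _ _ _

end Inner

theorem limsup_le_limsup_of_le_add {ι : Type*} {l : Filter ι} [l.NeBot] {a b e : ι → ℝ}
    (hab : ∀ᶠ i in l, a i ≤ b i + e i) (he : Tendsto e l (𝓝 0))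
    (ha : IsCoboundedUnder (· ≤ ·) l a) (hb : IsBoundedUnder (· ≤ ·) l b)
    (hb' : IsBoundedUnder (· ≥ ·) l b) :
    limsup a l ≤ limsup b l :=
  calc limsup a l ≤ limsup (b + e) l :=
        limsup_le_limsup hab ha (isBoundedUnder_le_add hb he.isBoundedUnder_le)
    _ ≤ limsup b l + limsup e l :=
        limsup_add_le hb' hb he.isCoboundedUnder_le he.isBoundedUnder_le
    _ = limsup b l := by rw [he.limsup_eq, add_zero]

section Translate

variable {G E : Type*} [AddCommGroup G] [SeminormedAddCommGroup E] [NormedSpace ℝ E]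

theorem avg_avg_add_sub_avg {F : Finset G} (hF : F.Nonempty) (Φ : Finset G) (g : G → E) :
    avg Φ (fun u => avg F (fun v => g (u + v))) - avg Φ g =
      avg F (fun v => avg Φ (fun u => g (u + v)) - avg Φ g) := by
  rw [avg_comm Φ F (fun u v => g (u + v)), avg_sub, avg_const hF]

variable [DecidableEq G]

theorem norm_avg_add_sub_avg_le {g : G → E} {C : ℝ} (hg : ∀ u, ‖g u‖ ≤ C) (Φ : Finset G)
    (v : G) :
    ‖avg Φ (fun u => g (u + v)) - avg Φ g‖ ≤ C * #(Φ.image (v + ·) ∆ Φ) / #Φ := by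
  have hsum : ∑ u ∈ Φ, g (u + v) = ∑ x ∈ Φ.image (v + ·), g x := by
    rw [sum_image fun _ _ _ _ => add_left_cancel]
    simp_rw [add_comm]
  rw [avg, avg, ← smul_sub, hsum, norm_smul, norm_inv, Real.norm_natCast, inv_mul_eq_div]
  gcongr
  exact norm_sum_sub_sum_le _ _ hg

theorem _root_.IsFolner.tendsto_avg_add_sub_avg {Φ : ℕ → Finset G} (hΦ : IsFolner Φ)
    {g : G → E} {C : ℝ} (hg : ∀ u, ‖g u‖ ≤ C) (v : G) :
    Tendsto (fun N => avg (Φ N) (fun u => g (u + v)) - avg (Φ N) g) atTop (𝓝 0) := by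
  refine squeeze_zero_norm (fun N => norm_avg_add_sub_avg_le hg (Φ N) v) ?_
  have := (hΦ.2 v).const_mul C
  rw [mul_zero] at this
  convert this using 2 with N
  rw [mul_div_assoc]
  rfl

end Translate

end VanDerCorput

open VanDerCorput

theorem van_der_corput_finite_set_general
    {G : Type*} [AddCommGroup G] [DecidableEq G]
    {H : Type*} [NormedAddCommGroup H] [InnerProductSpace ℝ H]
    (g : G → H) (hg : ∃ C, ∀ u, ‖g u‖ ≤ C)
    (Φ : ℕ → Finset G) (hΦ : IsFolner Φ)
    (F : Finset G) (hF : F.Nonempty) :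
    Filter.limsup
        (fun N => ‖((Φ N).card : ℝ)⁻¹ • ∑ u ∈ Φ N, g u‖ ^ 2) Filter.atTop ≤
      Filter.limsup
        (fun N => ((F.card : ℝ) ^ 2)⁻¹ * ∑ v ∈ F, ∑ w ∈ F,
          ((Φ N).card : ℝ)⁻¹ * ∑ u ∈ Φ N, (inner ℝ (g (u + v)) (g (u + w)) : ℝ))
        Filter.atTop := by
  obtain ⟨C, hC⟩ := hg
  have hC0 : 0 ≤ C := (norm_nonneg _).trans (hC 0)
  set h : G → H := fun u => avg F fun v => g (u + v)
  set A : ℕ → H := fun N => avg (Φ N) g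
  set B : ℕ → H := fun N => avg (Φ N) h
  set R : ℕ → ℝ := fun N => avg (Φ N) fun u => ‖h u‖ ^ 2
  have hh : ∀ u, ‖h u‖ ≤ C := fun u => norm_avg_le hC0 fun v _ => hC (u + v)
  have hA : ∀ N, ‖A N‖ ≤ C := fun N => norm_avg_le hC0 fun u _ => hC u
  have hB : ∀ N, ‖B N‖ ≤ C := fun N => norm_avg_le hC0 fun u _ => hh u
  have hR_nonneg : ∀ N, 0 ≤ R N := fun N => avg_nonneg fun u _ => by positivity
  have hR_le : ∀ N, R N ≤ C ^ 2 := fun N =>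
    avg_le (by positivity) fun u _ => pow_le_pow_left₀ (norm_nonneg _) (hh u) 2
  have hAB : Tendsto (fun N => 2 * C * ‖A N - B N‖) atTop (𝓝 0) := by
    have hBA := tendsto_avg (s := F) fun v _ => hΦ.tendsto_avg_add_sub_avg hC v
    simp only [← avg_avg_add_sub_avg hF] at hBA
    rw [show avg F (fun _ => (0 : H)) = 0 by simp [avg]] at hBA
    simpa only [norm_sub_rev, norm_zero, mul_zero] using hBA.norm.const_mul (2 * C)
  have hAR : ∀ N, ‖A N‖ ^ 2 ≤ R N + 2 * C * ‖A N - B N‖ := fun N =>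
    calc ‖A N‖ ^ 2 ≤ ‖B N‖ ^ 2 + 2 * C * ‖A N - B N‖ := sq_norm_le_sq_norm_add (hA N) (hB N)
      _ ≤ R N + 2 * C * ‖A N - B N‖ := by gcongr; exact sq_norm_avg_le_avg_sq_norm _ _
  calc limsup (fun N => ‖A N‖ ^ 2) atTop ≤ limsup R atTop :=
        limsup_le_limsup_of_le_add (.of_forall hAR) hAB
          (isCoboundedUnder_le_of_le _ (x := 0) fun N => by positivity)
          (isBoundedUnder_of ⟨C ^ 2, hR_le⟩) (isBoundedUnder_of ⟨0, hR_nonneg⟩)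
    _ = _ := by
        congr 1
        funext N
        exact avg_sq_norm_avg_eq _ _ _

/-- A van der Corput-type estimate: for a bounded family `{g_u}` in a Hilbert space
indexed by a finitely generated abelian group, a Følner sequence `{Φ_N}` and a finite
nonempty set `F`, the limsup of `‖avg‖²` is controlled by averaged correlations. -/
theorem van_der_corput_finite_set
    {G : Type*} [AddCommGroup G] [AddGroup.FG G] [DecidableEq G]
    {H : Type*} [NormedAddCommGroup H] [InnerProductSpace ℝ H] [CompleteSpace H]
    (g : G → H) (hg : ∃ C, ∀ u, ‖g u‖ ≤ C)
    (Φ : ℕ → Finset G) (hΦ : IsFolner Φ)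
    (F : Finset G) (hF : F.Nonempty) :
    Filter.limsup
        (fun N => ‖((Φ N).card : ℝ)⁻¹ • ∑ u ∈ Φ N, g u‖ ^ 2) Filter.atTop ≤
      Filter.limsup
        (fun N => ((F.card : ℝ) ^ 2)⁻¹ * ∑ v ∈ F, ∑ w ∈ F,
          ((Φ N).card : ℝ)⁻¹ * ∑ u ∈ Φ N, (inner ℝ (g (u + v)) (g (u + w)) : ℝ))
        Filter.atTop :=
  van_der_corput_finite_set_general g hg Φ hΦ F hF
end

section
/- Let {g_u}_{u∈G} be a bounded family of elements of a Hilbert space H indexed by a finitely generated abelian group G and let {Φ_N} be a Følner sequence in G. Then there exists a Følner sequence {Θ_M} in G³ such that limsup_{N→∞} ‖(1/|Φ_N|) Σ_{u∈Φ_N} g_u‖² ≤ limsup_{M→∞} (1/|Θ_M|) Σ_{(u,v,w)∈Θ_M} ⟨g_{u+v}, g_{u+w}⟩. -/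
open MeasureTheory Filter

/-!
Averaging the shifts `g (u + v)` over `v ∈ Φ M` moves the `Φ N`-average of `g` by at most
`C = sup ‖g‖` times the `Φ M`-average of the Følner defects `|(v + Φ N) ∆ Φ N| / |Φ N|`,
which tends to `0` as `N → ∞` for fixed `M`. Exchanging the two averages and using convexity
of `‖·‖²`, the square of the averaged average is at most the average of `⟪g (u + v), g (u + w)⟫`
over `Φ N × Φ M × Φ M`. Choosing `N = φ M` so that `‖avg_{Φ N} g‖²` is close to its limsup and
the defect term is below `1 / (M + 1)` produces the Følner sequence `Θ M = Φ (φ M) × Φ M × Φ M`.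
-/

open Finset Topology
open scoped symmDiff

section Average

variable {ι E : Type*} [SeminormedAddCommGroup E] [NormedSpace ℝ E]

lemma norm_avg_le_avg_norm (s : Finset ι) (f : ι → E) :
    ‖(#s : ℝ)⁻¹ • ∑ i ∈ s, f i‖ ≤ (#s : ℝ)⁻¹ * ∑ i ∈ s, ‖f i‖ := by
  rw [norm_smul, norm_inv, Real.norm_natCast]
  gcongr
  exact norm_sum_le s f

lemma avg_le_of_forall_le {s : Finset ι} (hs : s.Nonempty) {f : ι → ℝ} {c : ℝ}
    (h : ∀ i ∈ s, f i ≤ c) : (#s : ℝ)⁻¹ * ∑ i ∈ s, f i ≤ c := by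
  rw [inv_mul_le_iff₀ (by exact_mod_cast hs.card_pos)]
  simpa using sum_le_sum h

lemma norm_avg_le_of_forall_norm_le {s : Finset ι} (hs : s.Nonempty) {f : ι → E} {C : ℝ}
    (h : ∀ i ∈ s, ‖f i‖ ≤ C) : ‖(#s : ℝ)⁻¹ • ∑ i ∈ s, f i‖ ≤ C :=
  (norm_avg_le_avg_norm s f).trans (avg_le_of_forall_le hs h)

lemma sq_avg_le_avg_sq (s : Finset ι) (f : ι → ℝ) :
    ((#s : ℝ)⁻¹ * ∑ i ∈ s, f i) ^ 2 ≤ (#s : ℝ)⁻¹ * ∑ i ∈ s, f i ^ 2 := by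
  rcases s.eq_empty_or_nonempty with rfl | hs
  · simp
  have hcard : (#s : ℝ) ≠ 0 := by exact_mod_cast hs.card_pos.ne'
  calc ((#s : ℝ)⁻¹ * ∑ i ∈ s, f i) ^ 2 = (#s : ℝ)⁻¹ ^ 2 * (∑ i ∈ s, f i) ^ 2 := mul_pow _ _ _
    _ ≤ (#s : ℝ)⁻¹ ^ 2 * (#s * ∑ i ∈ s, f i ^ 2) := by gcongr; exact sq_sum_le_card_mul_sum_sq
    _ = (#s : ℝ)⁻¹ * ∑ i ∈ s, f i ^ 2 := by field_simp

lemma sq_norm_avg_le_avg_sq_norm (s : Finset ι) (f : ι → E) :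
    ‖(#s : ℝ)⁻¹ • ∑ i ∈ s, f i‖ ^ 2 ≤ (#s : ℝ)⁻¹ * ∑ i ∈ s, ‖f i‖ ^ 2 :=
  (pow_le_pow_left₀ (norm_nonneg _) (norm_avg_le_avg_norm s f) 2).trans (sq_avg_le_avg_sq s _)

end Average

section InnerProduct

variable {α β H : Type*} [NormedAddCommGroup H] [InnerProductSpace ℝ H]

lemma sum_inner_product_self_eq_sq_norm_sum (t : Finset β) (f : β → H) :
    ∑ x ∈ t ×ˢ t, inner ℝ (f x.1) (f x.2) = ‖∑ v ∈ t, f v‖ ^ 2 := by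
  rw [← real_inner_self_eq_norm_sq, sum_product, sum_inner]
  simp only [inner_sum]

lemma avg_inner_product_eq_avg_sq_norm_avg (s : Finset α) (t : Finset β) (f : α → β → H) :
    (#(s ×ˢ t ×ˢ t) : ℝ)⁻¹ * ∑ x ∈ s ×ˢ t ×ˢ t, inner ℝ (f x.1 x.2.1) (f x.1 x.2.2) =
      (#s : ℝ)⁻¹ * ∑ u ∈ s, ‖(#t : ℝ)⁻¹ • ∑ v ∈ t, f u v‖ ^ 2 := by
  rw [sum_product]
  simp only [sum_inner_product_self_eq_sq_norm_sum, norm_smul, norm_inv, Real.norm_natCast,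
    mul_pow, card_product, mul_sum]
  refine sum_congr rfl fun u _ => ?_
  push_cast
  ring

end InnerProduct

lemma Finset.product_symmDiff_product_subset {α β : Type*} [DecidableEq α] [DecidableEq β]
    (s s' : Finset α) (t t' : Finset β) :
    (s' ×ˢ t') ∆ (s ×ˢ t) ⊆ (s' ∆ s) ×ˢ t' ∪ s ×ˢ (t' ∆ t) := by
  rintro ⟨x, y⟩
  simp only [mem_symmDiff, mem_union, mem_product]
  tauto

section Folner

variable {G G' : Type*} [AddCommGroup G] [AddCommGroup G'] [DecidableEq G] [DecidableEq G']

noncomputable def folnerDefect (s : Finset G) (g : G) : ℝ := (#(s.image (g + ·) ∆ s) : ℝ) / #s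

lemma isFolner_iff {Φ : ℕ → Finset G} :
    IsFolner Φ ↔ (∀ N, (Φ N).Nonempty) ∧ ∀ g, Tendsto (fun N => folnerDefect (Φ N) g) atTop (𝓝 0) :=
  Iff.rfl

lemma folnerDefect_nonneg (s : Finset G) (g : G) : 0 ≤ folnerDefect s g := by
  unfold folnerDefect
  positivity

lemma image_add_left_product (a : G) (b : G') (s : Finset G) (t : Finset G') :
    (s ×ˢ t).image ((a, b) + ·) = s.image (a + ·) ×ˢ t.image (b + ·) :=
  prodMap_image_product _ _ s t

lemma folnerDefect_product_le {s : Finset G} {t : Finset G'} (hs : s.Nonempty) (ht : t.Nonempty)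
    (a : G) (b : G') :
    folnerDefect (s ×ˢ t) (a, b) ≤ folnerDefect s a + folnerDefect t b := by
  have hcard : #((s ×ˢ t).image ((a, b) + ·) ∆ (s ×ˢ t)) ≤
      #(s.image (a + ·) ∆ s) * #t + #s * #(t.image (b + ·) ∆ t) := by
    rw [image_add_left_product]
    calc _ ≤ #((s.image (a + ·) ∆ s) ×ˢ t.image (b + ·) ∪ s ×ˢ (t.image (b + ·) ∆ t)) :=
          card_le_card (product_symmDiff_product_subset _ _ _ _)
      _ ≤ _ := (card_union_le _ _).trans_eq <| by
          rw [card_product, card_product, card_image_of_injective _ (add_right_injective b)]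
  have hs' : (0 : ℝ) < #s := by exact_mod_cast hs.card_pos
  have ht' : (0 : ℝ) < #t := by exact_mod_cast ht.card_pos
  unfold folnerDefect
  rw [card_product, Nat.cast_mul, div_add_div _ _ hs'.ne' ht'.ne',
    div_le_div_iff_of_pos_right (by positivity)]
  exact_mod_cast hcard

lemma IsFolner.prod {Φ : ℕ → Finset G} {Ψ : ℕ → Finset G'} (hΦ : IsFolner Φ) (hΨ : IsFolner Ψ) :
    IsFolner (fun N => Φ N ×ˢ Ψ N) := by
  refine ⟨fun N => (hΦ.1 N).product (hΨ.1 N), ?_⟩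
  rintro ⟨a, b⟩
  have h := (hΦ.2 a).add (hΨ.2 b)
  rw [add_zero] at h
  exact squeeze_zero (fun N => folnerDefect_nonneg _ _)
    (fun N => folnerDefect_product_le (hΦ.1 N) (hΨ.1 N) a b) h

lemma IsFolner.comp_tendsto {Φ : ℕ → Finset G} (hΦ : IsFolner Φ) {φ : ℕ → ℕ}
    (hφ : Tendsto φ atTop atTop) : IsFolner (Φ ∘ φ) :=
  ⟨fun M => hΦ.1 (φ M), fun g => (hΦ.2 g).comp hφ⟩

lemma IsFolner.tendsto_avg_folnerDefect {Φ : ℕ → Finset G} (hΦ : IsFolner Φ) (t : Finset G) :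
    Tendsto (fun N => (#t : ℝ)⁻¹ * ∑ v ∈ t, folnerDefect (Φ N) v) atTop (𝓝 0) := by
  simpa using (tendsto_finsetSum t fun v _ => (isFolner_iff.1 hΦ).2 v).const_mul (#t : ℝ)⁻¹

lemma norm_sum_add_sub_sum_le {E : Type*} [SeminormedAddCommGroup E] {g : G → E} {C : ℝ}
    (hC : ∀ u, ‖g u‖ ≤ C) (s : Finset G) (v : G) :
    ‖∑ u ∈ s, g (u + v) - ∑ u ∈ s, g u‖ ≤ C * #(s.image (v + ·) ∆ s) := by
  set s' := s.image (v + ·)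
  have hshift : ∑ u ∈ s, g (u + v) = ∑ u ∈ s', g u := by
    rw [sum_image fun x _ y _ h => add_right_injective v h]
    simp only [add_comm]
  rw [hshift, ← sum_sdiff_sub_sum_sdiff, Finset.symmDiff_def,
    card_union_of_disjoint disjoint_sdiff_sdiff, Nat.cast_add, mul_add]
  refine (norm_sub_le _ _).trans (add_le_add ?_ ?_) <;>
    simpa [mul_comm] using norm_sum_le_of_le _ fun u _ => hC u

lemma norm_avg_add_sub_avg_le {E : Type*} [SeminormedAddCommGroup E] [NormedSpace ℝ E]
    {g : G → E} {C : ℝ} (hC : ∀ u, ‖g u‖ ≤ C) (s : Finset G) (v : G) :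
    ‖(#s : ℝ)⁻¹ • ∑ u ∈ s, g (u + v) - (#s : ℝ)⁻¹ • ∑ u ∈ s, g u‖ ≤ C * folnerDefect s v := by
  rw [← smul_sub, norm_smul, norm_inv, Real.norm_natCast, folnerDefect, mul_div_assoc',
    div_eq_inv_mul]
  gcongr
  exact norm_sum_add_sub_sum_le hC s v

end Folner

theorem sq_norm_avg_le_avg_inner_add {G H : Type*} [AddCommGroup G] [DecidableEq G]
    [NormedAddCommGroup H] [InnerProductSpace ℝ H] {g : G → H} {C : ℝ} (hC : ∀ u, ‖g u‖ ≤ C)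
    {s t : Finset G} (hs : s.Nonempty) (ht : t.Nonempty) :
    ‖(#s : ℝ)⁻¹ • ∑ u ∈ s, g u‖ ^ 2 ≤
      (#(s ×ˢ t ×ˢ t) : ℝ)⁻¹ * ∑ x ∈ s ×ˢ t ×ˢ t, inner ℝ (g (x.1 + x.2.1)) (g (x.1 + x.2.2)) +
        2 * C ^ 2 * ((#t : ℝ)⁻¹ * ∑ v ∈ t, folnerDefect s v) := by
  set a := (#s : ℝ)⁻¹ • ∑ u ∈ s, g u
  set b := (#s : ℝ)⁻¹ • ∑ u ∈ s, (#t : ℝ)⁻¹ • ∑ v ∈ t, g (u + v)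
  have hC0 : 0 ≤ C := (norm_nonneg _).trans (hC 0)
  have hb_comm : b = (#t : ℝ)⁻¹ • ∑ v ∈ t, (#s : ℝ)⁻¹ • ∑ u ∈ s, g (u + v) := by
    simp only [b, smul_sum, smul_comm (#s : ℝ)⁻¹ (#t : ℝ)⁻¹]
    exact sum_comm
  have hba : ‖b - a‖ ≤ C * ((#t : ℝ)⁻¹ * ∑ v ∈ t, folnerDefect s v) := by
    have ha_avg : a = (#t : ℝ)⁻¹ • ∑ v ∈ t, a := by
      rw [sum_const, ← Nat.cast_smul_eq_nsmul ℝ, smul_smul,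
        inv_mul_cancel₀ (by exact_mod_cast ht.card_pos.ne'), one_smul]
    rw [hb_comm, ha_avg, ← smul_sub, ← sum_sub_distrib]
    calc _ ≤ (#t : ℝ)⁻¹ * ∑ v ∈ t, ‖(#s : ℝ)⁻¹ • ∑ u ∈ s, g (u + v) - a‖ :=
          norm_avg_le_avg_norm t _
      _ ≤ (#t : ℝ)⁻¹ * ∑ v ∈ t, C * folnerDefect s v := by
          gcongr with v
          exact norm_avg_add_sub_avg_le hC s v
      _ = _ := by rw [← mul_sum]; ring
  have ha : ‖a‖ ≤ C := norm_avg_le_of_forall_norm_le hs fun u _ => hC u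
  have hb : ‖b‖ ≤ C := norm_avg_le_of_forall_norm_le hs fun u _ =>
    norm_avg_le_of_forall_norm_le ht fun v _ => hC (u + v)
  have hb_sq : ‖b‖ ^ 2 ≤
      (#(s ×ˢ t ×ˢ t) : ℝ)⁻¹ * ∑ x ∈ s ×ˢ t ×ˢ t, inner ℝ (g (x.1 + x.2.1)) (g (x.1 + x.2.2)) :=
    (sq_norm_avg_le_avg_sq_norm s _).trans_eq
      (avg_inner_product_eq_avg_sq_norm_avg s t fun u v => g (u + v)).symm
  have hab : ‖a‖ - ‖b‖ ≤ ‖b - a‖ := norm_sub_rev a b ▸ norm_sub_norm_le a b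
  have hsq : ‖a‖ ^ 2 ≤ ‖b‖ ^ 2 + 2 * C * ‖b - a‖ := by
    nlinarith [mul_nonneg (sub_nonneg.2 hab) (add_nonneg (norm_nonneg a) (norm_nonneg b)),
      mul_nonneg (norm_nonneg (b - a)) (by linarith : 0 ≤ 2 * C - ‖a‖ - ‖b‖)]
  nlinarith [mul_le_mul_of_nonneg_left hba (by positivity : 0 ≤ 2 * C)]

lemma exists_tendsto_atTop_limsup_le_limsup_diag {a : ℕ → ℝ} {b ε : ℕ → ℕ → ℝ}
    (ha : IsBoundedUnder (· ≥ ·) atTop a) (hb : ∃ K, ∀ N M, b N M ≤ K)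
    (hab : ∀ N M, a N ≤ b N M + ε N M) (hε : ∀ M, Tendsto (ε · M) atTop (𝓝 0)) :
    ∃ φ : ℕ → ℕ, Tendsto φ atTop atTop ∧ limsup a atTop ≤ limsup (fun M => b (φ M) M) atTop := by
  set L := limsup a atTop
  have hchoice : ∀ M : ℕ, ∃ N, M ≤ N ∧ L - 1 / (M + 1) < a N ∧ ε N M < 1 / (M + 1) := by
    intro M
    have hpos : (0 : ℝ) < 1 / (M + 1) := by positivity
    have hfreq : ∃ᶠ N in atTop, L - 1 / (M + 1) < a N :=
      frequently_lt_of_lt_limsup ha.isCoboundedUnder_le (sub_lt_self L hpos)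
    have hev : ∀ᶠ N in atTop, M ≤ N ∧ ε N M < 1 / (M + 1) :=
      (eventually_ge_atTop M).and ((hε M).eventually (gt_mem_nhds hpos))
    obtain ⟨N, hlarge, hN, hsmall⟩ := (hfreq.and_eventually hev).exists
    exact ⟨N, hN, hlarge, hsmall⟩
  choose φ hφ_ge ha_φ hε_φ using hchoice
  refine ⟨φ, tendsto_atTop_mono hφ_ge tendsto_id, ?_⟩
  have hlim : Tendsto (fun M : ℕ => L - 2 * (1 / (M + 1 : ℝ))) atTop (𝓝 L) := by
    simpa using (tendsto_const_nhds (x := L)).sub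
      ((tendsto_one_div_add_atTop_nhds_zero_nat (𝕜 := ℝ)).const_mul 2)
  obtain ⟨K, hK⟩ := hb
  rw [← hlim.limsup_eq]
  refine limsup_le_limsup (Eventually.of_forall fun M => ?_)
    hlim.isBoundedUnder_ge.isCoboundedUnder_le (isBoundedUnder_of ⟨K, fun M => hK _ _⟩)
  linarith [hab (φ M) M, ha_φ M, hε_φ M]

theorem van_der_corput_folner_general
    {G : Type*} [AddCommGroup G] [DecidableEq G]
    {H : Type*} [NormedAddCommGroup H] [InnerProductSpace ℝ H]
    (g : G → H) (hg : ∃ C, ∀ u, ‖g u‖ ≤ C)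
    (Φ : ℕ → Finset G) (hΦ : IsFolner Φ) :
    ∃ Θ : ℕ → Finset (G × G × G), IsFolner Θ ∧
      Filter.limsup
          (fun N => ‖((Φ N).card : ℝ)⁻¹ • ∑ u ∈ Φ N, g u‖ ^ 2) Filter.atTop ≤
        Filter.limsup
          (fun M => ((Θ M).card : ℝ)⁻¹ *
            ∑ t ∈ Θ M, (inner ℝ (g (t.1 + t.2.1)) (g (t.1 + t.2.2)) : ℝ))
          Filter.atTop := by
  obtain ⟨C, hC⟩ := hg
  have hcorr_le : ∀ N M, (#(Φ N ×ˢ Φ M ×ˢ Φ M) : ℝ)⁻¹ *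
      ∑ x ∈ Φ N ×ˢ Φ M ×ˢ Φ M, inner ℝ (g (x.1 + x.2.1)) (g (x.1 + x.2.2)) ≤ C * C :=
    fun N M => avg_le_of_forall_le ((hΦ.1 N).product ((hΦ.1 M).product (hΦ.1 M))) fun x _ =>
      (real_inner_le_norm _ _).trans (mul_le_mul (hC _) (hC _) (norm_nonneg _)
        ((norm_nonneg _).trans (hC 0)))
  obtain ⟨φ, hφ, hlimsup⟩ := exists_tendsto_atTop_limsup_le_limsup_diag
    (isBoundedUnder_of ⟨0, fun N => by positivity⟩) ⟨C * C, hcorr_le⟩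
    (fun N M => sq_norm_avg_le_avg_inner_add hC (hΦ.1 N) (hΦ.1 M))
    (fun M => by simpa using (hΦ.tendsto_avg_folnerDefect (Φ M)).const_mul (2 * C ^ 2))
  exact ⟨fun M => Φ (φ M) ×ˢ Φ M ×ˢ Φ M, (hΦ.comp_tendsto hφ).prod (hΦ.prod hΦ), hlimsup⟩

/-- A van der Corput-type estimate: for a bounded family `{g_u}` in a Hilbert space
indexed by a finitely generated abelian group and a Følner sequence `{Φ_N}`, there is a
Følner sequence `{Θ_M}` in `G³` controlling the limsup of `‖avg‖²` by averaged
correlations. -/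
theorem van_der_corput_folner
    {G : Type*} [AddCommGroup G] [AddGroup.FG G] [DecidableEq G]
    {H : Type*} [NormedAddCommGroup H] [InnerProductSpace ℝ H] [CompleteSpace H]
    (g : G → H) (hg : ∃ C, ∀ u, ‖g u‖ ≤ C)
    (Φ : ℕ → Finset G) (hΦ : IsFolner Φ) :
    ∃ Θ : ℕ → Finset (G × G × G), IsFolner Θ ∧
      Filter.limsup
          (fun N => ‖((Φ N).card : ℝ)⁻¹ • ∑ u ∈ Φ N, g u‖ ^ 2) Filter.atTop ≤
        Filter.limsup
          (fun M => ((Θ M).card : ℝ)⁻¹ *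
            ∑ t ∈ Θ M, (inner ℝ (g (t.1 + t.2.1)) (g (t.1 + t.2.2)) : ℝ))
          Filter.atTop :=
  van_der_corput_folner_general g hg Φ hΦ
end

section
/- Let q : ℤ^d → ℤ be a polynomial that is not identically zero. Then the set Z = {u ∈ ℤ^d : q(u) = 0} has zero density with respect to every Følner sequence in ℤ^d; that is, for every Følner sequence {Φ_N} in ℤ^d, |Z ∩ Φ_N|/|Φ_N| → 0 as N → ∞. -/
open MeasureTheory Filter

open MvPolynomial Finset

namespace PolyDensityAux

variable {d : ℕ}

/-- Shift of a polynomial by a vector `w`. -/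
noncomputable def shiftP (w : Fin d → ℤ) (q : MvPolynomial (Fin d) ℤ) : MvPolynomial (Fin d) ℤ :=
  bind₁ (fun i => X i + C (w i)) q

lemma eval_shiftP (w u : Fin d → ℤ) (q : MvPolynomial (Fin d) ℤ) :
    eval u (shiftP w q) = eval (u + w) q := by
  have h := eval₂Hom_bind₁ (RingHom.id ℤ) u (fun i : Fin d => X i + C (w i)) q
  rw [shiftP, show eval u = eval₂Hom (RingHom.id ℤ) u from rfl, h]
  simp [Pi.add_apply]
  rfl

lemma tdlt_add {p q : MvPolynomial (Fin d) ℤ} {n : ℕ}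
    (hp : p = 0 ∨ p.totalDegree < n) (hq : q = 0 ∨ q.totalDegree < n) :
    p + q = 0 ∨ (p + q).totalDegree < n := by
  rcases hp with rfl | hp
  · simpa using hq
  · rcases hq with rfl | hq
    · simpa using Or.inr hp
    · exact Or.inr <| lt_of_le_of_lt (totalDegree_add p q) (max_lt hp hq)

lemma tdlt_mul {p q : MvPolynomial (Fin d) ℤ} {n k : ℕ}
    (hp : p = 0 ∨ p.totalDegree < n) (hq : q.totalDegree ≤ k) :
    p * q = 0 ∨ (p * q).totalDegree < n + k := by
  rcases hp with rfl | hp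
  · simp
  · exact Or.inr <| lt_of_le_of_lt (totalDegree_mul p q)
      (by omega)

end PolyDensityAux

namespace PolyDensityAux

variable {d : ℕ}

lemma pow_diff (a : Fin d) (c : ℤ) (e : ℕ) :
    (X a + C c) ^ e - X a ^ e = 0 ∨
      ((X a + C c) ^ e - X a ^ e : MvPolynomial (Fin d) ℤ).totalDegree < e := by
  induction e with
  | zero => simp
  | succ e ih =>
    have hXC : ((X a + C c : MvPolynomial (Fin d) ℤ)).totalDegree ≤ 1 := by
      refine le_trans (totalDegree_add _ _) ?_
      refine max_le (le_of_eq (totalDegree_X a)) ?_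
      exact le_trans (le_of_eq (totalDegree_C c)) (by omega)
    have key : (X a + C c) ^ (e + 1) - X a ^ (e + 1)
        = ((X a + C c) ^ e - X a ^ e) * (X a + C c) + X a ^ e * C c := by
      ring
    rw [key]
    refine tdlt_add (tdlt_mul ih hXC) (Or.inr ?_)
    refine lt_of_le_of_lt (totalDegree_mul _ _) ?_
    have h1 : ((X a : MvPolynomial (Fin d) ℤ) ^ e).totalDegree ≤ e := by
      refine le_trans (totalDegree_pow _ _) ?_
      simp [totalDegree_X]
    rw [totalDegree_C]
    omega

lemma prod_diff (w : Fin d → ℤ) (m : Fin d → ℕ) (s : Finset (Fin d)) :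
    (∏ i ∈ s, (X i + C (w i)) ^ m i) - ∏ i ∈ s, (X i : MvPolynomial (Fin d) ℤ) ^ m i = 0 ∨
      ((∏ i ∈ s, (X i + C (w i)) ^ m i) - ∏ i ∈ s, (X i : MvPolynomial (Fin d) ℤ) ^ m i).totalDegree
        < ∑ i ∈ s, m i := by
  induction s using Finset.induction_on with
  | empty => simp
  | @insert a s ha ih =>
    rw [Finset.prod_insert ha, Finset.prod_insert ha, Finset.sum_insert ha]
    have hB0 : (∏ i ∈ s, (X i : MvPolynomial (Fin d) ℤ) ^ m i).totalDegree ≤ ∑ i ∈ s, m i := by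
      refine le_trans (totalDegree_finset_prod _ _) (Finset.sum_le_sum fun i _ => ?_)
      refine le_trans (totalDegree_pow _ _) ?_
      simp [totalDegree_X]
    have hA : ((X a + C (w a) : MvPolynomial (Fin d) ℤ) ^ m a).totalDegree ≤ m a := by
      refine le_trans (totalDegree_pow _ _) ?_
      have hXC : ((X a + C (w a) : MvPolynomial (Fin d) ℤ)).totalDegree ≤ 1 := by
        refine le_trans (totalDegree_add _ _) ?_
        refine max_le (le_of_eq (totalDegree_X a)) ?_
        exact le_trans (le_of_eq (totalDegree_C (w a))) (by omega)
      calc m a * (X a + C (w a) : MvPolynomial (Fin d) ℤ).totalDegree ≤ m a * 1 :=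
            Nat.mul_le_mul_left _ hXC
        _ = m a := by omega
    have key : (X a + C (w a)) ^ m a * ∏ i ∈ s, (X i + C (w i)) ^ m i
          - X a ^ m a * ∏ i ∈ s, (X i : MvPolynomial (Fin d) ℤ) ^ m i
        = ((X a + C (w a)) ^ m a - X a ^ m a) * ∏ i ∈ s, (X i : MvPolynomial (Fin d) ℤ) ^ m i
          + (X a + C (w a)) ^ m a *
            ((∏ i ∈ s, (X i + C (w i)) ^ m i) - ∏ i ∈ s, (X i : MvPolynomial (Fin d) ℤ) ^ m i) := by
      ring
    rw [key]
    refine tdlt_add (tdlt_mul (pow_diff a (w a) (m a)) hB0) ?_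
    have := tdlt_mul ih hA
    rcases this with h0 | hlt
    · left
      rw [mul_comm]
      exact h0
    · right
      rw [mul_comm]
      omega

end PolyDensityAux

namespace PolyDensityAux

variable {d : ℕ}

lemma tdlt_sum {ι : Type*} {s : Finset ι} {f : ι → MvPolynomial (Fin d) ℤ} {n : ℕ}
    (h : ∀ i ∈ s, f i = 0 ∨ (f i).totalDegree < n) :
    (∑ i ∈ s, f i) = 0 ∨ (∑ i ∈ s, f i).totalDegree < n := by
  classical
  induction s using Finset.induction_on with
  | empty => simp
  | @insert a s ha ih =>
    rw [Finset.sum_insert ha]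
    exact tdlt_add (h a (Finset.mem_insert_self a s))
      (ih fun i hi => h i (Finset.mem_insert_of_mem hi))

lemma monomial_diff (w : Fin d → ℤ) (m : Fin d →₀ ℕ) (c : ℤ) :
    shiftP w (monomial m c) - monomial m c = 0 ∨
      (shiftP w (monomial m c) - monomial m c).totalDegree < m.sum fun _ e => e := by
  have h1 : shiftP w (monomial m c) = C c * ∏ i ∈ m.support, (X i + C (w i)) ^ m i :=
    bind₁_monomial _ _ _
  have h2 : (monomial m c : MvPolynomial (Fin d) ℤ)
      = C c * ∏ i ∈ m.support, (X i : MvPolynomial (Fin d) ℤ) ^ m i := by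
    rw [monomial_eq]; rfl
  have key : shiftP w (monomial m c) - monomial m c
      = C c * ((∏ i ∈ m.support, (X i + C (w i)) ^ m i)
          - ∏ i ∈ m.support, (X i : MvPolynomial (Fin d) ℤ) ^ m i) := by
    rw [h1, h2, mul_sub]
  rw [key]
  have hsum : (m.sum fun _ e => e) = ∑ i ∈ m.support, m i := rfl
  rcases prod_diff w (fun i => m i) m.support with h0 | hlt
  · left; rw [h0, mul_zero]
  · right
    refine lt_of_le_of_lt (totalDegree_mul _ _) ?_
    rw [totalDegree_C, hsum]
    omega

lemma shiftP_sub (w : Fin d → ℤ) (q : MvPolynomial (Fin d) ℤ) :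
    shiftP w q - q = 0 ∨ (shiftP w q - q).totalDegree < q.totalDegree := by
  have expand : shiftP w q - q
      = ∑ m ∈ q.support, (shiftP w (monomial m (coeff m q)) - monomial m (coeff m q)) := by
    rw [Finset.sum_sub_distrib]
    congr 1
    · show (bind₁ fun i => X i + C (w i)) q = _
      conv_lhs => rw [as_sum q]
      rw [map_sum]
      rfl
    · exact as_sum q
  rw [expand]
  refine tdlt_sum fun m hm => ?_
  refine (monomial_diff w m (coeff m q)).imp_right fun h => ?_
  exact lt_of_lt_of_le h (le_totalDegree hm)

end PolyDensityAux

namespace PolyDensityAux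

variable {d : ℕ}

/-- Restriction of a multivariate polynomial to a line. -/
noncomputable def linePoly (u g : Fin d → ℤ) (q : MvPolynomial (Fin d) ℤ) : Polynomial ℤ :=
  eval₂ Polynomial.C (fun i => Polynomial.C (u i) + Polynomial.C (g i) * Polynomial.X) q

lemma linePoly_eval (u g : Fin d → ℤ) (q : MvPolynomial (Fin d) ℤ) (t : ℤ) :
    (linePoly u g q).eval t = eval (fun i => u i + g i * t) q := by
  have h := eval₂_comp_left (Polynomial.evalRingHom t) Polynomial.C
    (fun i => Polynomial.C (u i) + Polynomial.C (g i) * Polynomial.X) q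
  have hC : (Polynomial.evalRingHom t).comp Polynomial.C = RingHom.id ℤ := by
    ext x; simp
  rw [linePoly]
  show (Polynomial.evalRingHom t) _ = _
  rw [h, hC]
  rw [show (eval (fun i => u i + g i * t) q) = eval₂ (RingHom.id ℤ) (fun i => u i + g i * t) q
    from rfl]
  congr 1
  funext i
  simp

lemma periodic_of_periodic_mul (g : Fin d → ℤ) (q : MvPolynomial (Fin d) ℤ) (m : ℕ) (hm : 1 ≤ m)
    (h : ∀ u : Fin d → ℤ, eval (fun i => u i + (m : ℤ) * g i) q = eval u q) :
    ∀ u : Fin d → ℤ, eval (fun i => u i + g i) q = eval u q := by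
  intro u
  have hiter : ∀ n : ℕ, eval (fun i => u i + ((n * m : ℕ) : ℤ) * g i) q = eval u q := by
    intro n
    induction n with
    | zero => simp
    | succ n ih =>
      have : (fun i => u i + (((n + 1) * m : ℕ) : ℤ) * g i)
          = fun i => (u i + ((n * m : ℕ) : ℤ) * g i) + (m : ℤ) * g i := by
        funext i; push_cast; ring
      rw [this, h (fun i => u i + ((n * m : ℕ) : ℤ) * g i), ih]
  set p := linePoly u g q with hp
  have hroots : ∀ n : ℕ, (p - Polynomial.C (p.eval 0)).IsRoot ((n * m : ℕ) : ℤ) := by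
    intro n
    simp only [Polynomial.IsRoot, Polynomial.eval_sub, Polynomial.eval_C]
    rw [hp, linePoly_eval, linePoly_eval]
    have e1 : (fun i => u i + g i * ((n * m : ℕ) : ℤ)) = fun i => u i + ((n * m : ℕ) : ℤ) * g i := by
      funext i; ring
    have e0 : (fun i => u i + g i * (0 : ℤ)) = u := by
      funext i; ring
    rw [e1, hiter n, e0, sub_self]
  have hinj : Function.Injective (fun n : ℕ => ((n * m : ℕ) : ℤ)) := by
    intro a b hab
    simp only at hab
    have : a * m = b * m := by exact_mod_cast hab
    exact Nat.eq_of_mul_eq_mul_right hm this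
  have hinf : {x : ℤ | (p - Polynomial.C (p.eval 0)).IsRoot x}.Infinite :=
    Set.infinite_of_injective_forall_mem hinj hroots
  have hzero : p - Polynomial.C (p.eval 0) = 0 :=
    Polynomial.eq_zero_of_infinite_isRoot _ hinf
  have hconst : p.eval 1 = p.eval 0 := by
    have := sub_eq_zero.mp hzero
    rw [this]; simp
  rw [hp, linePoly_eval, linePoly_eval] at hconst
  have e1 : (fun i => u i + g i) = fun i => u i + g i * (1 : ℤ) := by
    funext i; ring
  have e0 : (fun i => u i + g i * (0 : ℤ)) = u := by
    funext i; ring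
  rw [e1, hconst, e0]

end PolyDensityAux

namespace PolyDensityAux

variable {G : Type*} [DecidableEq G]

lemma card_filter_le_add (P : G → Prop) [DecidablePred P] (s t : Finset G) :
    (s.filter P).card ≤ (t.filter P).card + (s \ t).card := by
  have hsub : s.filter P ⊆ t.filter P ∪ (s \ t) := by
    intro x hx
    simp only [Finset.mem_filter, Finset.mem_union, Finset.mem_sdiff] at *
    tauto
  exact le_trans (Finset.card_le_card hsub) (Finset.card_union_le _ _)

lemma card_filter_translate [AddCommGroup G] (P : G → Prop) [DecidablePred P]
    (s : Finset G) (w : G) :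
    (s.filter fun x => P (w + x)).card = ((s.image fun x => w + x).filter P).card := by
  rw [Finset.filter_image]
  rw [Finset.card_image_of_injective _ (add_right_injective w)]

/-- Pointwise Bonferroni-type bound. -/
lemma card_filter_le_one_add_offDiag {ι : Type*} [DecidableEq ι] (T : Finset ι)
    (Q : ι → Prop) [DecidablePred Q] :
    (T.filter Q).card ≤ 1 + (T.offDiag.filter fun p => Q p.1 ∧ Q p.2).card := by
  have hoff : (T.filter Q).offDiag = T.offDiag.filter fun p => Q p.1 ∧ Q p.2 := by
    ext ⟨i, j⟩
    simp only [Finset.mem_offDiag, Finset.mem_filter]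
    tauto
  rw [← hoff, Finset.offDiag_card]
  rcases he : (T.filter Q).card with _ | n
  · omega
  · rw [← he]
    rw [he]
    have h1 : (n + 1) * (n + 1) = (n + 1) * n + (n + 1) := by ring
    have h2 : n ≤ (n + 1) * n := Nat.le_mul_of_pos_left n (Nat.succ_pos n)
    omega

lemma sum_card_filter_comm {ι : Type*} (T : Finset ι) (s : Finset G) (Q : ι → G → Prop)
    [∀ i, DecidablePred (Q i)] [∀ x : G, DecidablePred (fun i => Q i x)] :
    ∑ j ∈ T, (s.filter (Q j)).card = ∑ x ∈ s, (T.filter fun j => Q j x).card := by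
  simp only [Finset.card_filter]
  exact Finset.sum_comm

end PolyDensityAux

namespace PolyDensityAux

open MvPolynomial Finset

set_option maxHeartbeats 1000000 in
lemma key {d : ℕ} (Φ : ℕ → Finset (Fin d → ℤ)) (hΦ : IsFolner Φ) (n : ℕ) :
    ∀ q : MvPolynomial (Fin d) ℤ, q.totalDegree ≤ n → (∃ u, eval u q ≠ 0) →
      Filter.Tendsto (fun N => ((((Φ N).filter fun u => eval u q = 0).card : ℝ) / (Φ N).card))
        Filter.atTop (nhds 0) := by
  induction n using Nat.strong_induction_on with
  | _ n IH =>
  intro q hdeg hq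
  by_cases hconst : ∀ u v : Fin d → ℤ, eval u q = eval v q
  · obtain ⟨u0, hu0⟩ := hq
    have hempty : ∀ N, (Φ N).filter (fun u => eval u q = 0) = ∅ := by
      intro N
      refine Finset.filter_false_of_mem fun x _ hx => ?_
      exact hu0 (((hconst x u0).symm.trans hx))
    have : (fun N => ((((Φ N).filter fun u => eval u q = 0).card : ℝ) / (Φ N).card))
        = fun _ => (0 : ℝ) := by
      funext N; rw [hempty N]; simp
    rw [this]
    exact tendsto_const_nhds
  · push_neg at hconst
    obtain ⟨u0, v0, huv⟩ := hconst
    set g : Fin d → ℤ := v0 - u0 with hg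
    set wv : ℕ → (Fin d → ℤ) := fun j => fun i => (j : ℤ) * g i with hwv
    set r : ℕ → MvPolynomial (Fin d) ℤ := fun m => shiftP (wv m) q - q with hr
    have heval_r : ∀ (m : ℕ) (y : Fin d → ℤ), eval y (r m) = eval (y + wv m) q - eval y q := by
      intro m y
      rw [hr]
      rw [map_sub, eval_shiftP]
    -- nonvanishing of r m for m ≥ 1
    have hr_wit : ∀ m : ℕ, 1 ≤ m → ∃ y, eval y (r m) ≠ 0 := by
      intro m hm
      by_contra hc
      push_neg at hc
      have hper : ∀ u : Fin d → ℤ, eval (fun i => u i + (m : ℤ) * g i) q = eval u q := by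
        intro u
        have h1 := hc u
        rw [heval_r, sub_eq_zero] at h1
        have : u + wv m = fun i => u i + (m : ℤ) * g i := by
          funext i; simp [hwv]
        rw [← this, h1]
      have h2 := periodic_of_periodic_mul g q m hm hper u0
      apply huv
      rw [← h2]
      have : (fun i => u0 i + g i) = v0 := by
        funext i; simp [hg]
      rw [this]
    -- degree bound
    have hr_ne : ∀ m : ℕ, 1 ≤ m → r m ≠ 0 := by
      intro m hm h0
      obtain ⟨y, hy⟩ := hr_wit m hm
      rw [h0] at hy
      simp at hy
    have hr_lt : ∀ m : ℕ, 1 ≤ m → (r m).totalDegree < q.totalDegree := by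
      intro m hm
      rcases shiftP_sub (wv m) q with h0 | hlt
      · exact absurd h0 (hr_ne m hm)
      · exact hlt
    have hn1 : 1 ≤ n := by
      have := hr_lt 1 le_rfl
      omega
    have hIH : ∀ m : ℕ, 1 ≤ m →
        Filter.Tendsto (fun N => ((((Φ N).filter fun y => eval y (r m) = 0).card : ℝ) / (Φ N).card))
          Filter.atTop (nhds 0) := by
      intro m hm
      refine IH (n - 1) (by omega) (r m) (by have := hr_lt m hm; omega) (hr_wit m hm)
    -- Følner data
    have hMpos : ∀ N, 0 < ((Φ N).card : ℝ) := by
      intro N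
      exact_mod_cast Finset.card_pos.mpr (hΦ.1 N)
    set Dset : (Fin d → ℤ) → ℕ → Finset (Fin d → ℤ) := fun w N =>
      (((Φ N).image (fun x => w + x)) \ Φ N) ∪ (Φ N \ ((Φ N).image (fun x => w + x))) with hDset
    have hD0 : ∀ w, Filter.Tendsto (fun N => ((Dset w N).card : ℝ) / (Φ N).card)
        Filter.atTop (nhds 0) := fun w => hΦ.2 w
    -- transfer inequalities
    have htrans1 : ∀ (P : (Fin d → ℤ) → Prop) (_ : DecidablePred P) (w : Fin d → ℤ) (N : ℕ),
        ((Φ N).filter fun x => P (w + x)).card ≤ ((Φ N).filter P).card + (Dset w N).card := by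
      intro P hP w N
      rw [card_filter_translate P (Φ N) w]
      refine le_trans (card_filter_le_add P _ (Φ N)) ?_
      exact Nat.add_le_add_left (Finset.card_le_card Finset.subset_union_left) _
    have htrans2 : ∀ (P : (Fin d → ℤ) → Prop) (_ : DecidablePred P) (w : Fin d → ℤ) (N : ℕ),
        ((Φ N).filter P).card ≤ ((Φ N).filter fun x => P (w + x)).card + (Dset w N).card := by
      intro P hP w N
      rw [card_filter_translate P (Φ N) w]
      refine le_trans (card_filter_le_add P (Φ N) ((Φ N).image fun x => w + x)) ?_
      exact Nat.add_le_add_left (Finset.card_le_card Finset.subset_union_right) _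
    -- pairwise intersection bound
    have hpair : ∀ (i j N : ℕ), i < j →
        ((Φ N).filter fun x => eval (wv i + x) q = 0 ∧ eval (wv j + x) q = 0).card
          ≤ ((Φ N).filter fun y => eval y (r (j - i)) = 0).card + (Dset (wv i) N).card := by
      intro i j N hij
      have hsub : ((Φ N).filter fun x => eval (wv i + x) q = 0 ∧ eval (wv j + x) q = 0)
          ⊆ (Φ N).filter fun x => eval (wv i + x) (r (j - i)) = 0 := by
        intro x hx
        simp only [Finset.mem_filter] at hx ⊢
        refine ⟨hx.1, ?_⟩
        rw [heval_r]
        have hw : wv i + x + wv (j - i) = wv j + x := by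
          funext k
          simp only [hwv, Pi.add_apply]
          have hc : ((j - i : ℕ) : ℤ) = (j : ℤ) - i := by
            exact_mod_cast Int.ofNat_sub hij.le
          rw [hc]; ring
        rw [hw, hx.2.2, hx.2.1, sub_zero]
      refine le_trans (Finset.card_le_card hsub) ?_
      exact htrans1 (fun y => eval y (r (j - i)) = 0) (by infer_instance) (wv i) N
    -- master counting inequality
    have master : ∀ (K N : ℕ),
        K * ((Φ N).filter fun u => eval u q = 0).card ≤ (Φ N).card
          + (∑ j ∈ Finset.range K, (Dset (wv j) N).card)
          + ∑ p ∈ (Finset.range K).offDiag,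
              (((Φ N).filter fun y => eval y (r (max p.1 p.2 - min p.1 p.2)) = 0).card
                + (Dset (wv (min p.1 p.2)) N).card) := by
      intro K N
      have step1 : ∀ j : ℕ, ((Φ N).filter fun u => eval u q = 0).card
          ≤ ((Φ N).filter fun x => eval (wv j + x) q = 0).card + (Dset (wv j) N).card := by
        intro j
        exact htrans2 (fun y => eval y q = 0) (by infer_instance) (wv j) N
      have step2 : ∑ j ∈ Finset.range K, ((Φ N).filter fun x => eval (wv j + x) q = 0).card
          = ∑ x ∈ Φ N, ((Finset.range K).filter fun j => eval (wv j + x) q = 0).card :=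
        sum_card_filter_comm _ _ _
      have step3 : ∀ x, ((Finset.range K).filter fun j => eval (wv j + x) q = 0).card
          ≤ 1 + (((Finset.range K).offDiag).filter
              fun p => eval (wv p.1 + x) q = 0 ∧ eval (wv p.2 + x) q = 0).card :=
        fun x => card_filter_le_one_add_offDiag _ _
      have step5 : ∑ x ∈ Φ N, (((Finset.range K).offDiag).filter
              fun p => eval (wv p.1 + x) q = 0 ∧ eval (wv p.2 + x) q = 0).card
          = ∑ p ∈ (Finset.range K).offDiag,
              ((Φ N).filter fun x => eval (wv p.1 + x) q = 0 ∧ eval (wv p.2 + x) q = 0).card :=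
        (sum_card_filter_comm _ _ _).symm
      have step6 : ∀ p ∈ (Finset.range K).offDiag,
          ((Φ N).filter fun x => eval (wv p.1 + x) q = 0 ∧ eval (wv p.2 + x) q = 0).card
            ≤ ((Φ N).filter fun y => eval y (r (max p.1 p.2 - min p.1 p.2)) = 0).card
              + (Dset (wv (min p.1 p.2)) N).card := by
        intro p hp
        have hne : p.1 ≠ p.2 := (Finset.mem_offDiag.mp hp).2.2
        rcases lt_or_gt_of_ne hne with h | h
        · rw [max_eq_right h.le, min_eq_left h.le]
          exact hpair p.1 p.2 N h
        · rw [max_eq_left h.le, min_eq_right h.le]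
          have hcomm : ((Φ N).filter fun x => eval (wv p.1 + x) q = 0 ∧ eval (wv p.2 + x) q = 0)
              = (Φ N).filter fun x => eval (wv p.2 + x) q = 0 ∧ eval (wv p.1 + x) q = 0 :=
            Finset.filter_congr fun x _ => and_comm
          rw [hcomm]
          exact hpair p.2 p.1 N h
      calc K * ((Φ N).filter fun u => eval u q = 0).card
          = ∑ _j ∈ Finset.range K, ((Φ N).filter fun u => eval u q = 0).card := by
            rw [Finset.sum_const, Finset.card_range, smul_eq_mul]
        _ ≤ ∑ j ∈ Finset.range K, (((Φ N).filter fun x => eval (wv j + x) q = 0).card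
              + (Dset (wv j) N).card) := Finset.sum_le_sum fun j _ => step1 j
        _ = (∑ j ∈ Finset.range K, ((Φ N).filter fun x => eval (wv j + x) q = 0).card)
              + ∑ j ∈ Finset.range K, (Dset (wv j) N).card := Finset.sum_add_distrib
        _ ≤ (∑ x ∈ Φ N, (1 + (((Finset.range K).offDiag).filter
              fun p => eval (wv p.1 + x) q = 0 ∧ eval (wv p.2 + x) q = 0).card))
              + ∑ j ∈ Finset.range K, (Dset (wv j) N).card := by
            rw [step2]
            exact Nat.add_le_add_right (Finset.sum_le_sum fun x _ => step3 x) _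
        _ = ((Φ N).card + ∑ p ∈ (Finset.range K).offDiag, ((Φ N).filter
              fun x => eval (wv p.1 + x) q = 0 ∧ eval (wv p.2 + x) q = 0).card)
              + ∑ j ∈ Finset.range K, (Dset (wv j) N).card := by
            rw [Finset.sum_add_distrib, Finset.sum_const, smul_eq_mul, mul_one, step5]
        _ ≤ ((Φ N).card + ∑ p ∈ (Finset.range K).offDiag,
              (((Φ N).filter fun y => eval y (r (max p.1 p.2 - min p.1 p.2)) = 0).card
                + (Dset (wv (min p.1 p.2)) N).card))
              + ∑ j ∈ Finset.range K, (Dset (wv j) N).card :=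
            Nat.add_le_add_right (Nat.add_le_add_left (Finset.sum_le_sum step6) _) _
        _ = _ := by ring
    -- final epsilon argument
    rw [Metric.tendsto_atTop]
    intro ε hε
    obtain ⟨K0, hK0⟩ := exists_nat_one_div_lt (half_pos hε)
    set K := K0 + 1 with hKdef
    have hKR : (0:ℝ) < (K : ℝ) := by positivity
    have hK1 : (1:ℝ) ≤ (K : ℝ) := by exact_mod_cast Nat.one_le_iff_ne_zero.mpr (by omega)
    have hE0 : Filter.Tendsto (fun N =>
        (∑ j ∈ Finset.range K, ((Dset (wv j) N).card : ℝ) / (Φ N).card)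
          + ∑ p ∈ (Finset.range K).offDiag,
            ((((Φ N).filter fun y => eval y (r (max p.1 p.2 - min p.1 p.2)) = 0).card : ℝ)
                + ((Dset (wv (min p.1 p.2)) N).card : ℝ)) / (Φ N).card)
        Filter.atTop (nhds 0) := by
      rw [show (0:ℝ) = 0 + 0 by norm_num]
      refine Filter.Tendsto.add ?_ ?_
      · have := tendsto_finset_sum (Finset.range K) (fun j (_ : j ∈ Finset.range K) => hD0 (wv j))
        simpa using this
      · have key : ∀ p ∈ (Finset.range K).offDiag, Filter.Tendsto (fun N =>
            ((((Φ N).filter fun y => eval y (r (max p.1 p.2 - min p.1 p.2)) = 0).card : ℝ)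
                + ((Dset (wv (min p.1 p.2)) N).card : ℝ)) / (Φ N).card)
            Filter.atTop (nhds 0) := by
          intro p hp
          have hne : p.1 ≠ p.2 := (Finset.mem_offDiag.mp hp).2.2
          have hm : 1 ≤ max p.1 p.2 - min p.1 p.2 := by
            rcases lt_or_gt_of_ne hne with h | h
            · rw [max_eq_right h.le, min_eq_left h.le]; omega
            · rw [max_eq_left h.le, min_eq_right h.le]; omega
          have hlim := (hIH _ hm).add (hD0 (wv (min p.1 p.2)))
          rw [add_zero] at hlim
          simpa [add_div] using hlim
        have := tendsto_finset_sum ((Finset.range K).offDiag) key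
        simpa using this
    have hbound : ∀ N, ((((Φ N).filter fun u => eval u q = 0).card : ℝ) / (Φ N).card)
        ≤ 1 / (K : ℝ) +
          ((∑ j ∈ Finset.range K, ((Dset (wv j) N).card : ℝ) / (Φ N).card)
          + ∑ p ∈ (Finset.range K).offDiag,
            ((((Φ N).filter fun y => eval y (r (max p.1 p.2 - min p.1 p.2)) = 0).card : ℝ)
                + ((Dset (wv (min p.1 p.2)) N).card : ℝ)) / (Φ N).card) := by
      intro N
      have hMN := hMpos N
      have hmaster := master K N
      set S1 : ℝ := ∑ j ∈ Finset.range K, ((Dset (wv j) N).card : ℝ) with hS1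
      set S2 : ℝ := ∑ p ∈ (Finset.range K).offDiag,
            ((((Φ N).filter fun y => eval y (r (max p.1 p.2 - min p.1 p.2)) = 0).card : ℝ)
                + ((Dset (wv (min p.1 p.2)) N).card : ℝ)) with hS2
      have hS1nn : 0 ≤ S1 := Finset.sum_nonneg fun j _ => by positivity
      have hS2nn : 0 ≤ S2 := Finset.sum_nonneg fun p _ => by positivity
      have hcast : (K : ℝ) * ((Φ N).filter fun u => eval u q = 0).card
          ≤ ((Φ N).card : ℝ) + S1 + S2 := by
        have := (Nat.cast_le (α := ℝ)).mpr hmaster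
        push_cast at this
        rw [hS1, hS2]
        convert this using 2 <;> push_cast <;> ring
      have h3 : (((Φ N).filter fun u => eval u q = 0).card : ℝ)
          ≤ (((Φ N).card : ℝ) + (S1 + S2)) / (K : ℝ) := by
        rw [le_div_iff₀ hKR]
        linarith [hcast]
      have h5 : (((Φ N).card : ℝ) + (S1 + S2)) / (K : ℝ)
          ≤ ((Φ N).card : ℝ) / (K : ℝ) + (S1 + S2) := by
        rw [add_div]
        have := div_le_self (by linarith : (0:ℝ) ≤ S1 + S2) hK1
        linarith
      have h6 : (((Φ N).filter fun u => eval u q = 0).card : ℝ) / ((Φ N).card : ℝ)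
          ≤ (((Φ N).card : ℝ) / (K : ℝ) + (S1 + S2)) / ((Φ N).card : ℝ) :=
        (div_le_div_iff_of_pos_right hMN).mpr (le_trans h3 h5)
      refine le_trans h6 ?_
      have h7 : (((Φ N).card : ℝ) / (K : ℝ) + (S1 + S2)) / ((Φ N).card : ℝ)
          = 1 / (K : ℝ) + (S1 + S2) / ((Φ N).card : ℝ) := by
        rw [add_div, div_div, mul_comm (K : ℝ), ← div_div, div_self (ne_of_gt hMN)]
      rw [h7]
      have h8 : (S1 + S2) / ((Φ N).card : ℝ)
          = S1 / ((Φ N).card : ℝ) + S2 / ((Φ N).card : ℝ) := add_div _ _ _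
      rw [h8, hS1, hS2, Finset.sum_div, Finset.sum_div]
    have hFt : Filter.Tendsto (fun N => 1 / (K : ℝ) +
        ((∑ j ∈ Finset.range K, ((Dset (wv j) N).card : ℝ) / (Φ N).card)
          + ∑ p ∈ (Finset.range K).offDiag,
            ((((Φ N).filter fun y => eval y (r (max p.1 p.2 - min p.1 p.2)) = 0).card : ℝ)
                + ((Dset (wv (min p.1 p.2)) N).card : ℝ)) / (Φ N).card))
        Filter.atTop (nhds (1 / (K : ℝ) + 0)) := tendsto_const_nhds.add hE0
    have hlt : 1 / (K : ℝ) + 0 < ε := by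
      rw [add_zero]
      have hKeq : (K : ℝ) = (K0 : ℝ) + 1 := by push_cast [hKdef]; ring
      rw [hKeq]
      linarith [hK0, half_lt_self hε]
    have hev := hFt.eventually_lt_const hlt
    rw [Filter.eventually_atTop] at hev
    obtain ⟨N0, hN0⟩ := hev
    refine ⟨N0, fun N hN => ?_⟩
    have hb := hbound N
    have hnn : 0 ≤ ((((Φ N).filter fun u => eval u q = 0).card : ℝ) / (Φ N).card) := by
      positivity
    rw [Real.dist_eq, sub_zero, abs_of_nonneg hnn]
    exact lt_of_le_of_lt hb (hN0 N hN)

end PolyDensityAux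


/-- The zero set of a polynomial `q : ℤ^d → ℤ` that is not identically zero has zero
density along every Følner sequence in `ℤ^d`. -/
theorem polynomial_zero_set_density_zero
    {d : ℕ} (q : MvPolynomial (Fin d) ℤ)
    (hq : ∃ u : Fin d → ℤ, MvPolynomial.eval u q ≠ 0)
    (Φ : ℕ → Finset (Fin d → ℤ)) (hΦ : IsFolner Φ) :
    Filter.Tendsto
      (fun N => ((((Φ N).filter (fun u => MvPolynomial.eval u q = 0)).card : ℝ) / (Φ N).card))
      Filter.atTop (nhds 0) := by
  exact PolyDensityAux.key Φ hΦ q.totalDegree q le_rfl hq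
end
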